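/- arXiv:1811.05257 — 3 statements merged into one kernel-verified Lean document; each statement's English description precedes it below -/
import Mathlib

section
/- Let s₁, ..., s_n ≥ 1 be integers, K a field containing a primitive p^s-th root of unity with s = max{s₁,...,s_n}, and α₁, ..., α_n ∈ K such that [K(α₁^{1/p^{s₁}}, ..., α_n^{1/p^{s_n}}) : K] = p^{s₁+...+s_n}. Then for every i ≥ 2, the class of α_i in K*/(K*)^p does not belong to the subgroup generated by the classes of α₁, ..., α_{i−1}. -/
/-! If `αᵢ = c ^ p * ∏_{j<i} αⱼ ^ xⱼ`, then `βᵢ ^ p ^ (sᵢ - 1)` and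
`c * ∏_{j<i} (βⱼ ^ p ^ (sⱼ - 1)) ^ xⱼ` are both `p`-th roots of `αᵢ`, so they differ by a
`p`-th root of unity, which lies in `K`. Hence `βᵢ ^ p ^ (sᵢ - 1)` lies in `L = K(βⱼ : j ≠ i)`,
so `[K(β) : L] ≤ p ^ (sᵢ - 1)`, while `[L : K] ≤ p ^ ∑_{j ≠ i} sⱼ`: the degree of `K(β)` is
smaller than `p ^ ∑ sⱼ`. -/

open IntermediateField Polynomial

section

variable {K Ω : Type*} [Field K] [Field Ω] [Algebra K Ω]

theorem finrank_adjoin_simple_le_of_pow_eq_algebraMap {x : Ω} {d : ℕ} (hd : d ≠ 0) {a : K}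
    (hx : x ^ d = algebraMap K Ω a) : Module.finrank K K⟮x⟯ ≤ d := by
  have hroot : aeval x (X ^ d - C a) = 0 := by simp [hx]
  have hint : IsIntegral K x := ⟨X ^ d - C a, monic_X_pow_sub_C a hd, by simpa using hroot⟩
  rw [adjoin.finrank hint, ← natDegree_X_pow_sub_C (n := d) (r := a)]
  exact natDegree_le_natDegree <| minpoly.degree_le_of_ne_zero K x (X_pow_sub_C_ne_zero
    (Nat.pos_of_ne_zero hd) a) hroot

theorem finrank_adjoin_insert_le_of_pow_mem {S : Set Ω} {x : Ω} {d : ℕ} (hd : d ≠ 0)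
    (hx : x ^ d ∈ adjoin K S) :
    Module.finrank K (adjoin K (insert x S)) ≤ Module.finrank K (adjoin K S) * d := by
  set E := adjoin K S
  have hEx : (adjoin E {x}).restrictScalars K = adjoin K (insert x S) := by
    rw [adjoin_adjoin_left, Set.union_comm, Set.singleton_union]
  calc Module.finrank K (adjoin K (insert x S))
      = Module.finrank K E * Module.finrank E E⟮x⟯ := by
        rw [← hEx]; exact (Module.finrank_mul_finrank K E E⟮x⟯).symm
    _ ≤ Module.finrank K E * d := Nat.mul_le_mul_left _
        (finrank_adjoin_simple_le_of_pow_eq_algebraMap hd (a := ⟨_, hx⟩) rfl)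

theorem finrank_adjoin_image_le_prod {ι : Type*} (t : Finset ι) (b : ι → Ω) (d : ι → ℕ)
    (hd : ∀ j ∈ t, d j ≠ 0) (hb : ∀ j ∈ t, b j ^ d j ∈ Set.range (algebraMap K Ω)) :
    Module.finrank K (adjoin K (b '' t)) ≤ ∏ j ∈ t, d j := by
  classical
  induction t using Finset.induction with
  | empty =>
    rw [Finset.coe_empty, Set.image_empty, adjoin_empty, IntermediateField.finrank_bot,
      Finset.prod_empty]
  | @insert j t hjt ih =>
    simp only [Finset.mem_insert, forall_eq_or_imp] at hd hb
    obtain ⟨a, ha⟩ := hb.1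
    rw [Finset.coe_insert, Set.image_insert_eq, Finset.prod_insert hjt, mul_comm]
    calc Module.finrank K (adjoin K (insert (b j) (b '' t)))
        ≤ Module.finrank K (adjoin K (b '' t)) * d j :=
          finrank_adjoin_insert_le_of_pow_mem hd.1 (ha ▸ IntermediateField.algebraMap_mem _ a)
      _ ≤ (∏ k ∈ t, d k) * d j := Nat.mul_le_mul_right _ (ih hd.2 hb.2)

theorem mem_of_pow_eq_pow_of_isPrimitiveRoot {n : ℕ} [NeZero n] {ζ : K}
    (hζ : IsPrimitiveRoot ζ n) {E : IntermediateField K Ω} {x y : Ω} (hy : y ∈ E)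
    (hxy : x ^ n = y ^ n) : x ∈ E := by
  rcases eq_or_ne y 0 with rfl | hy0
  · rw [zero_pow (NeZero.ne n), pow_eq_zero_iff (NeZero.ne n)] at hxy
    exact hxy ▸ E.zero_mem
  obtain ⟨k, -, hk⟩ := (hζ.map_of_injective (algebraMap K Ω).injective).eq_pow_of_pow_eq_one
    (ξ := x / y) (by rw [div_pow, hxy, div_self (pow_ne_zero n hy0)])
  rw [← div_mul_cancel₀ x hy0, ← hk, ← map_pow]
  exact mul_mem (E.algebraMap_mem _) hy

theorem finrank_adjoin_range_le_of_pow_mem_adjoin {ι : Type*} [Fintype ι] [DecidableEq ι]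
    (b : ι → Ω) (e : ι → ℕ) {i : ι} (he : ∀ j ≠ i, e j ≠ 0)
    (hb : ∀ j ≠ i, b j ^ e j ∈ Set.range (algebraMap K Ω)) {d : ℕ} (hd : d ≠ 0)
    (hi : b i ^ d ∈ adjoin K (b '' (Finset.univ.erase i))) :
    Module.finrank K (adjoin K (Set.range b)) ≤ (∏ j ∈ Finset.univ.erase i, e j) * d := by
  have hrange : Set.range b = insert (b i) (b '' (Finset.univ.erase i)) := by
    rw [← Set.image_insert_eq, ← Finset.coe_insert, Finset.insert_erase (Finset.mem_univ i),
      Finset.coe_univ, Set.image_univ]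
  rw [hrange]
  refine (finrank_adjoin_insert_le_of_pow_mem hd hi).trans (Nat.mul_le_mul_right _ ?_)
  exact finrank_adjoin_image_le_prod _ b e (fun j hj => he j (Finset.ne_of_mem_erase hj))
    fun j hj => hb j (Finset.ne_of_mem_erase hj)

theorem pow_pow_sub_one_pow {M : Type*} [Monoid M] (z : M) {p s : ℕ} (hs : 1 ≤ s) :
    (z ^ p ^ (s - 1)) ^ p = z ^ p ^ s := by
  rw [← pow_mul, ← pow_succ, Nat.sub_add_cancel hs]

theorem pow_pow_sub_one_mem_adjoin_of_eq_pow_mul_prod {ι : Type*} {p : ℕ} [NeZero p] {ζ : K}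
    (hζ : IsPrimitiveRoot ζ p) {s : ι → ℕ} {α : ι → K} {β : ι → Ω}
    (hβ : ∀ j, β j ^ p ^ s j = algebraMap K Ω (α j)) {i : ι} (hi : 1 ≤ s i) {T : Finset ι}
    (hT : ∀ j ∈ T, 1 ≤ s j) (c : K) (x : ι → ℤ) (hα : α i = c ^ p * ∏ j ∈ T, α j ^ x j) :
    β i ^ p ^ (s i - 1) ∈ adjoin K (β '' T) := by
  refine mem_of_pow_eq_pow_of_isPrimitiveRoot hζ
    (y := algebraMap K Ω c * ∏ j ∈ T, (β j ^ p ^ (s j - 1)) ^ x j) ?_ ?_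
  · exact mul_mem (IntermediateField.algebraMap_mem _ c) <| prod_mem fun j hj =>
      zpow_mem (pow_mem (subset_adjoin K _ (Set.mem_image_of_mem β hj)) _) _
  · rw [pow_pow_sub_one_pow _ hi, hβ i, hα, mul_pow, map_mul, map_pow, map_prod,
      ← Finset.prod_pow]
    refine congrArg _ (Finset.prod_congr rfl fun j hj => ?_)
    rw [map_zpow₀, ← hβ j, ← pow_pow_sub_one_pow _ (hT j hj), ← zpow_natCast, ← zpow_natCast,
      ← zpow_natCast, zpow_comm]

end

/-- Let `s₁, ..., s_n ≥ 1`, `K` a field containing a primitive `p^s`-th root of unity with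
`s = max sᵢ`, and `α₁, ..., α_n ∈ K` such that
`[K(α₁^{1/p^{s₁}}, ..., α_n^{1/p^{s_n}}) : K] = p^{s₁+...+s_n}`.  Then for every `i ≥ 2`
the class of `αᵢ` in `K*/(K*)^p` does not belong to the subgroup generated by the classes
of `α₁, ..., α_{i-1}`. -/
theorem kummer_independence_of_maximal_degree (p : ℕ) (hp : p.Prime)
    (K Ω : Type*) [Field K] [Field Ω] [Algebra K Ω]
    (n : ℕ) (s : Fin n → ℕ) (hs : ∀ i, 1 ≤ s i)
    (ζ : K) (hζ : IsPrimitiveRoot ζ (p ^ Finset.univ.sup s))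
    (α : Fin n → K) (β : Fin n → Ω)
    (hβ : ∀ i, β i ^ (p ^ s i) = algebraMap K Ω (α i))
    (hdeg : Module.finrank K ↥(IntermediateField.adjoin K (Set.range β)) = p ^ (∑ i, s i)) :
    ∀ i : Fin n, 0 < (i : ℕ) →
      ¬∃ (c : K) (x : Fin n → ℤ),
        α i = c ^ p * ∏ j ∈ Finset.univ.filter (fun j => j < i), α j ^ x j := by
  rintro i - ⟨c, x, hαi⟩
  have : NeZero p := ⟨hp.ne_zero⟩
  have hsup : 1 ≤ Finset.univ.sup s := (hs i).trans (Finset.le_sup (Finset.mem_univ i))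
  have hζp : IsPrimitiveRoot (ζ ^ p ^ (Finset.univ.sup s - 1)) p :=
    hζ.pow (pow_pos hp.pos _) (by rw [← pow_succ, Nat.sub_add_cancel hsup])
  have hβi : β i ^ p ^ (s i - 1) ∈ adjoin K (β '' (Finset.univ.erase i)) := by
    refine adjoin.mono K _ _ (Set.image_mono fun j hj => ?_)
      (pow_pow_sub_one_mem_adjoin_of_eq_pow_mul_prod hζp hβ (hs i) (fun j _ => hs j) c x hαi)
    simpa using (Finset.mem_filter.mp hj).2.ne
  have hle : p ^ (∑ j, s j) ≤ p ^ ((∑ j, s j) - 1) := calc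
    p ^ (∑ j, s j) = Module.finrank K (adjoin K (Set.range β)) := hdeg.symm
    _ ≤ (∏ j ∈ Finset.univ.erase i, p ^ s j) * p ^ (s i - 1) :=
      finrank_adjoin_range_le_of_pow_mem_adjoin β _ (fun j _ => pow_ne_zero _ hp.ne_zero)
        (fun j _ => ⟨α j, (hβ j).symm⟩) (pow_ne_zero _ hp.ne_zero) hβi
    _ = p ^ ((∑ j, s j) - 1) := by
      rw [Finset.prod_pow_eq_pow_sum, ← pow_add, ← Nat.add_sub_assoc (hs i),
        Finset.sum_erase_add _ _ (Finset.mem_univ i)]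
  have hpos : 0 < ∑ j, s j :=
    (hs i).trans (Finset.single_le_sum (fun j _ => Nat.zero_le (s j)) (Finset.mem_univ i))
  exact (Nat.pow_lt_pow_right hp.one_lt (Nat.sub_lt hpos one_pos)).not_ge hle
end

section
/- Let F/ℚ₂ be a finite unramified extension, b ∈ F with b ∉ F² and −b ∉ F², and β a fourth root of b in an algebraic closure of F. Then F(β)/F is not a Galois extension. -/
/-- The `ℤ_[p]`-algebra structure on a field `L` over `ℚ_[p]`. -/
noncomputable def padicIntAlgebra (p : ℕ) [Fact p.Prime] (L : Type*) [Field L]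
    [Algebra ℚ_[p] L] : Algebra ℤ_[p] L :=
  ((algebraMap ℚ_[p] L).comp (algebraMap ℤ_[p] ℚ_[p])).toAlgebra

/-- The ring of integers of a `p`-adic field `L`, i.e. the integral closure of `ℤ_[p]` in `L`. -/
noncomputable def ringOfInt (p : ℕ) [Fact p.Prime] (L : Type*) [Field L]
    [Algebra ℚ_[p] L] : Subring L :=
  letI := padicIntAlgebra p L
  (integralClosure ℤ_[p] L).toSubring

/-- The maximal ideal of the ring of integers of `L` (its Jacobson radical). -/
noncomputable def maxIdeal (p : ℕ) [Fact p.Prime] (L : Type*) [Field L]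
    [Algebra ℚ_[p] L] : Ideal (ringOfInt p L) :=
  (⊥ : Ideal (ringOfInt p L)).jacobson

/-- The `i`-th ramification group (in lower numbering) of `L/K`, as a subset of `Gal(L/K)`:
`σ ∈ G_i` iff `σ x - x ∈ 𝔭_L ^ (i+1)` for every `x` in the ring of integers of `L`. -/
noncomputable def ramSet (p : ℕ) [Fact p.Prime] (K L : Type*) [Field K] [Field L]
    [Algebra ℚ_[p] L] [Algebra K L] (i : ℕ) : Set (L ≃ₐ[K] L) :=
  {σ | ∀ x : ringOfInt p L, ∃ y ∈ maxIdeal p L ^ (i + 1), (y : L) = σ (x : L) - (x : L)}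

/-- `t` is a ramification jump of `L/K` if `G_t ≠ G_{t+1}`. -/
noncomputable def IsRamJump (p : ℕ) [Fact p.Prime] (K L : Type*) [Field K] [Field L]
    [Algebra ℚ_[p] L] [Algebra K L] (t : ℕ) : Prop :=
  ramSet p K L t ≠ ramSet p K L (t + 1)

/-- `L/K` has a unique ramification jump, equal to `t`. -/
noncomputable def HasUniqueRamJump (p : ℕ) [Fact p.Prime] (K L : Type*) [Field K] [Field L]
    [Algebra ℚ_[p] L] [Algebra K L] (t : ℕ) : Prop :=
  IsRamJump p K L t ∧ ∀ t', IsRamJump p K L t' → t' = t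

/-- Same as `HasUniqueRamJump`, with the `K`-algebra structure on `L` given by an
explicit ring homomorphism. -/
noncomputable def HasUniqueRamJumpHom (p : ℕ) [Fact p.Prime] (K L : Type*) [Field K] [Field L]
    [Algebra ℚ_[p] L] (f : K →+* L) (t : ℕ) : Prop :=
  letI := f.toAlgebra
  HasUniqueRamJump p K L t

/-- The absolute ramification index `e(L|ℚ_p)`, i.e. the valuation of `p` in `L`. -/
noncomputable def eAbs (p : ℕ) [Fact p.Prime] (L : Type*) [Field L] [Algebra ℚ_[p] L] : ℕ :=
  sSup {n : ℕ | Ideal.span {(p : ringOfInt p L)} ≤ maxIdeal p L ^ n}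

/-- The normalized valuation `v_L(x)` of an integral element `x` of `L`. -/
noncomputable def valInt (p : ℕ) [Fact p.Prime] (L : Type*) [Field L] [Algebra ℚ_[p] L]
    (x : L) : ℕ :=
  sSup {n : ℕ | ∃ y ∈ maxIdeal p L ^ n, (y : L) = x}

/-!
If `F(β)/F` were normal it would contain the conjugate root `iβ` of `X⁴ - b` (irreducible by
Capelli, since `±b ∉ F²`), hence `i = √-1`, which is not in `F` because `F/ℚ₂` is unramified.
Then `β` has degree `2` over `F(i)`, so its norm `N` to `F(i)` satisfies `N⁴ = N(β⁴) = b²`, i.e.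
`±b = N²` is a square in `F(i)`. But an element `c + di` of `F(i)` whose square lies in `F` has
`cd = 0`, so `±b` would already be a square in `F`.
-/

open Polynomial IntermediateField Module

theorem X_pow_four_sub_C_irreducible {K : Type*} [Field K] {a : K}
    (ha : ¬IsSquare a) (ha' : ¬IsSquare (-a)) : Irreducible (X ^ 4 - C a) := by
  have hsq : Irreducible (X ^ 2 - C a) :=
    X_pow_sub_C_irreducible_of_prime Nat.prime_two fun c hc => ha ⟨c, by rw [← hc, sq]⟩
  rw [show 4 = 2 * 2 from rfl]
  refine X_pow_mul_sub_C_irreducible hsq fun E _ _ x hx => ?_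
  have hint : IsIntegral K x := by
    by_contra h
    rw [minpoly.eq_zero h] at hx
    exact X_pow_sub_C_ne_zero two_pos a hx.symm
  -- a square root `y` of `x` would give `N(y) ^ 2 = N(x) = -a`
  refine X_pow_sub_C_irreducible_of_prime Nat.prime_two fun y hy => ha' ⟨Algebra.norm K y, ?_⟩
  rw [← sq, ← map_pow, hy, ← adjoin.powerBasis_gen hint,
    Algebra.PowerBasis.norm_gen_eq_coeff_zero_minpoly]
  simp [minpoly_gen, hx]

theorem minpoly_eq_X_pow_sub_C {F E : Type*} [Field F] [Field E] [Algebra F E] {n : ℕ} {a : F}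
    {α : E} (hirr : Irreducible (X ^ n - C a)) (hα : α ^ n = algebraMap F E a) :
    minpoly F α = X ^ n - C a := by
  have hn : n ≠ 0 := by
    rintro rfl
    rw [pow_zero, ← C.map_one, ← map_sub] at hirr
    exact not_irreducible_C _ hirr
  exact (minpoly.eq_of_irreducible_of_monic hirr (by simp [hα]) (monic_X_pow_sub_C a hn)).symm

theorem isSquare_or_isSquare_neg_of_natDegree_minpoly_eq_two {L Ω : Type*} [Field L] [Field Ω]
    [Algebra L Ω] {β : Ω} {b : L} (hβ : β ^ 4 = algebraMap L Ω b)
    (hdeg : (minpoly L β).natDegree = 2) : IsSquare b ∨ IsSquare (-b) := by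
  have hint : IsIntegral L β := by
    by_contra h
    rw [minpoly.eq_zero h] at hdeg
    simp at hdeg
  set N := Algebra.norm L (AdjoinSimple.gen L β)
  have hN : N ^ 4 = b ^ 2 := by
    have hgen : AdjoinSimple.gen L β ^ 4 = algebraMap L L⟮β⟯ b := Subtype.ext (by simpa using hβ)
    rw [← map_pow, hgen, Algebra.norm_algebraMap, adjoin.finrank hint, hdeg]
  rcases mul_eq_zero.mp (show (N ^ 2 - b) * (N ^ 2 + b) = 0 by linear_combination hN) with h | h
  · exact Or.inl ⟨N, by linear_combination -h⟩
  · exact Or.inr ⟨N, by linear_combination -h⟩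

theorem exists_eq_add_mul_of_mem_adjoin_of_sq_eq {F E : Type*} [Field F] [Field E] [Algebra F E]
    {i : E} {r : F} (hi : i ^ 2 = algebraMap F E r) {x : E} (hx : x ∈ F⟮i⟯) :
    ∃ c d : F, x = algebraMap F E c + algebraMap F E d * i := by
  have hint : IsIntegral F i := ⟨X ^ 2 - C r, monic_X_pow_sub_C r two_ne_zero, by simp [hi]⟩
  rw [← mem_toSubalgebra, adjoin_simple_toSubalgebra_of_isAlgebraic hint.isAlgebraic] at hx
  induction hx using Algebra.adjoin_induction with
  | mem x hx => exact ⟨0, 1, by simp [Set.mem_singleton_iff.mp hx]⟩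
  | algebraMap c => exact ⟨c, 0, by simp⟩
  | add x y _ _ hx hy =>
    obtain ⟨c, d, rfl⟩ := hx
    obtain ⟨c', d', rfl⟩ := hy
    exact ⟨c + c', d + d', by simp only [map_add]; ring⟩
  | mul x y _ _ hx hy =>
    obtain ⟨c, d, rfl⟩ := hx
    obtain ⟨c', d', rfl⟩ := hy
    exact ⟨c * c' + d * d' * r, c * d' + d * c', by
      simp only [map_add, map_mul]; linear_combination algebraMap F E d * algebraMap F E d' * hi⟩

theorem isSquare_or_isSquare_neg_of_sq_mem_adjoin {F E : Type*} [Field F] [Field E] [Algebra F E]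
    (hF : ¬IsSquare (-1 : F)) {i : E} (hi : i ^ 2 = -1) {x : E} (hx : x ∈ F⟮i⟯) {a : F}
    (hxa : x ^ 2 = algebraMap F E a) : IsSquare a ∨ IsSquare (-a) := by
  obtain ⟨c, d, rfl⟩ := exists_eq_add_mul_of_mem_adjoin_of_sq_eq (r := -1) (by simpa using hi) hx
  have hcd : c * d = 0 := by
    by_contra hcd
    have h2 : (2 : F) ≠ 0 := fun h => hF ⟨1, by linear_combination -h⟩
    set t := (a - c ^ 2 + d ^ 2) / (2 * c * d)
    have ht : algebraMap F E t = i := by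
      have : algebraMap F E (2 * c * d) ≠ 0 := by
        rw [mul_assoc]; exact (_root_.map_ne_zero _).mpr (mul_ne_zero h2 hcd)
      rw [map_div₀, div_eq_iff this]
      simp only [map_add, map_sub, map_mul, map_pow, map_ofNat] at hxa ⊢
      linear_combination -hxa + algebraMap F E d ^ 2 * hi
    exact hF ⟨t, (algebraMap F E).injective (by simp [ht, ← sq, hi])⟩
  rcases mul_eq_zero.mp hcd with rfl | rfl
  · right
    refine ⟨d, (algebraMap F E).injective ?_⟩
    simp only [map_zero, zero_add, map_neg, map_mul] at hxa ⊢
    linear_combination hxa - algebraMap F E d ^ 2 * hi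
  · left
    refine ⟨c, (algebraMap F E).injective ?_⟩
    simp only [map_zero, zero_mul, add_zero, map_mul] at hxa ⊢
    linear_combination -hxa

theorem finrank_mul_finrank_adjoin_simple_of_mem {F E : Type*} [Field F] [Field E] [Algebra F E]
    {α β : E} (h : α ∈ F⟮β⟯) : finrank F F⟮α⟯ * finrank F⟮α⟯ F⟮α⟯⟮β⟯ = finrank F F⟮β⟯ := by
  have hadj : F⟮α⟯⟮β⟯.restrictScalars F = F⟮β⟯ := by
    rw [adjoin_simple_adjoin_simple]
    refine le_antisymm (adjoin_le_iff.mpr (Set.insert_subset h ?_)) (adjoin.mono _ _ _ ?_) <;>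
      simp
  rw [Module.finrank_mul_finrank, ← hadj]
  rfl

theorem mem_adjoin_simple_of_aeval_minpoly_eq_zero {F E : Type*} [Field F] [Field E]
    [Algebra F E] {α γ : E} (hα : IsIntegral F α) [Normal F F⟮α⟯]
    (hγ : aeval γ (minpoly F α) = 0) : γ ∈ F⟮α⟯ := by
  have hsplit := Normal.splits (F := F) inferInstance (AdjoinSimple.gen F α)
  rw [minpoly_gen] at hsplit
  obtain ⟨x, rfl⟩ := hsplit.mem_range_of_isRoot (map_ne_zero (minpoly.ne_zero hα))
    (i := algebraMap F⟮α⟯ E) (by simpa [Polynomial.map_map, ← IsScalarTower.algebraMap_eq] using hγ)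
  exact x.2

theorem notMem_adjoin_of_pow_four_eq_of_sq_eq_neg_one {F E : Type*} [Field F] [Field E]
    [Algebra F E] (hF : ¬IsSquare (-1 : F)) {b : F} (hb : ¬IsSquare b) (hb' : ¬IsSquare (-b))
    {β i : E} (hβ : β ^ 4 = algebraMap F E b) (hi : i ^ 2 = -1) : i ∉ F⟮β⟯ := by
  intro hi_mem
  have hβ_int : IsIntegral F β := ⟨X ^ 4 - C b, monic_X_pow_sub_C b four_ne_zero, by simp [hβ]⟩
  have hi_int : IsIntegral F i :=
    ⟨X ^ 2 - C (-1), monic_X_pow_sub_C _ two_ne_zero, by simp [hi]⟩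
  have hi_min : minpoly F i = X ^ 2 - C (-1) :=
    minpoly_eq_X_pow_sub_C
      (X_pow_sub_C_irreducible_of_prime Nat.prime_two fun c hc => hF ⟨c, by rw [← hc, sq]⟩)
      (by simpa using hi)
  have hdeg : (minpoly F⟮i⟯ β).natDegree = 2 := by
    have := finrank_mul_finrank_adjoin_simple_of_mem hi_mem
    rw [adjoin.finrank hβ_int, adjoin.finrank hi_int, adjoin.finrank hβ_int.tower_top,
      minpoly_eq_X_pow_sub_C (X_pow_four_sub_C_irreducible hb hb') hβ, hi_min,
      natDegree_X_pow_sub_C, natDegree_X_pow_sub_C] at this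
    omega
  rcases isSquare_or_isSquare_neg_of_natDegree_minpoly_eq_two
    (b := algebraMap F F⟮i⟯ b) (by simpa using hβ) hdeg with ⟨x, hx⟩ | ⟨x, hx⟩
  · exact (isSquare_or_isSquare_neg_of_sq_mem_adjoin hF hi x.2 (a := b)
      (by simpa [sq] using congrArg Subtype.val hx.symm)).elim hb hb'
  · exact (isSquare_or_isSquare_neg_of_sq_mem_adjoin hF hi x.2 (a := -b)
      (by simpa [sq] using congrArg Subtype.val hx.symm)).elim hb' (by simpa using hb)

theorem not_isSquare_neg_one_of_maxIdeal_eq_span_two (F : Type*) [Field F] [Algebra ℚ_[2] F]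
    (hunram : maxIdeal 2 F = Ideal.span {(2 : ringOfInt 2 F)}) : ¬IsSquare (-1 : F) := by
  let := padicIntAlgebra 2 F
  have : CharZero F := charZero_of_injective_algebraMap (algebraMap ℚ_[2] F).injective
  rintro ⟨t, ht⟩
  have ht_int : t ∈ ringOfInt 2 F := ⟨X ^ 2 + 1, by monicity!, by simp [sq, ← ht]⟩
  set O := ringOfInt 2 F
  set tO : O := ⟨t, ht_int⟩
  have h2 : (2 : O) ≠ 0 := fun h => two_ne_zero (congrArg Subtype.val h)
  have h2c : ((2 : O) : F) = 2 := by norm_cast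
  have hsq : (1 + tO) ^ 2 = 2 * tO := Subtype.ext (by push_cast [h2c]; linear_combination -ht)
  have hunit : IsUnit tO :=
    IsUnit.of_mul_eq_one (-tO) (Subtype.ext (by push_cast; linear_combination ht))
  -- `(1 + t) ^ 2 = 2 t` puts `1 + t` in the radical ideal `(2)`, so `2 t ∈ (4)` and `t ∈ (2)`
  obtain ⟨v, hv⟩ : 2 ∣ 1 + tO := by
    rw [← Ideal.mem_span_singleton, ← hunram]
    refine Ideal.isRadical_jacobson ⊥ ⟨2, ?_⟩
    rw [← maxIdeal, hunram, hsq, Ideal.mem_span_singleton]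
    exact dvd_mul_right 2 tO
  have ht_mem : tO ∈ maxIdeal 2 F := by
    rw [hunram, Ideal.mem_span_singleton]
    exact ⟨v ^ 2, mul_left_cancel₀ h2 (by rw [← hsq, hv]; ring)⟩
  have htop := Ideal.jacobson_eq_top_iff.mp (Ideal.eq_top_of_isUnit_mem _ ht_mem hunit)
  exact bot_ne_top htop

theorem adjoin_fourth_root_not_galois_general (F : Type*) [Field F] [Algebra ℚ_[2] F]
    (hunram : maxIdeal 2 F = Ideal.span {(2 : ringOfInt 2 F)})
    (b : F) (hb1 : ¬∃ c : F, c ^ 2 = b) (hb2 : ¬∃ c : F, c ^ 2 = -b)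
    (β : AlgebraicClosure F) (hβ : β ^ 4 = algebraMap F (AlgebraicClosure F) b) :
    ¬IsGalois F ↥(IntermediateField.adjoin F {β}) := by
  intro hgal
  have hb : ¬IsSquare b ∧ ¬IsSquare (-b) := by
    simp only [isSquare_iff_exists_sq, eq_comm (a := b), eq_comm (a := -b)]
    exact ⟨hb1, hb2⟩
  obtain ⟨i, hi⟩ := IsAlgClosed.exists_pow_nat_eq (-1 : AlgebraicClosure F) two_pos
  refine notMem_adjoin_of_pow_four_eq_of_sq_eq_neg_one
    (not_isSquare_neg_one_of_maxIdeal_eq_span_two F hunram) hb.1 hb.2 hβ hi ?_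
  have hβ0 : β ≠ 0 := by
    rintro rfl
    exact hb.1 ⟨0, by simpa [eq_comm (a := (0 : AlgebraicClosure F))] using hβ⟩
  have hi4 : i ^ 4 = 1 := by rw [show 4 = 2 * 2 from rfl, pow_mul, hi]; ring
  have hiβ : i * β ∈ F⟮β⟯ :=
    mem_adjoin_simple_of_aeval_minpoly_eq_zero (Algebra.IsIntegral.isIntegral β) <| by
      simp [minpoly_eq_X_pow_sub_C (X_pow_four_sub_C_irreducible hb.1 hb.2) hβ, mul_pow, hβ, hi4]
  simpa [hβ0] using div_mem hiβ (mem_adjoin_simple_self F β)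

/-- Let `F/ℚ₂` be a finite unramified extension, `b ∈ F` with `b ∉ F²` and `-b ∉ F²`, and
`β` a fourth root of `b` in an algebraic closure of `F`.  Then `F(β)/F` is not Galois. -/
theorem adjoin_fourth_root_not_galois (F : Type*) [Field F] [Algebra ℚ_[2] F]
    [FiniteDimensional ℚ_[2] F]
    (hunram : maxIdeal 2 F = Ideal.span {(2 : ringOfInt 2 F)})
    (b : F) (hb1 : ¬∃ c : F, c ^ 2 = b) (hb2 : ¬∃ c : F, c ^ 2 = -b)
    (β : AlgebraicClosure F) (hβ : β ^ 4 = algebraMap F (AlgebraicClosure F) b) :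
    ¬IsGalois F ↥(IntermediateField.adjoin F {β}) :=
  adjoin_fourth_root_not_galois_general F hunram b hb1 hb2 β hβ
end

section
/- Let K be a field, n ≥ 2 an integer, and a ∈ K. Suppose a ∉ K^p for every prime p dividing n, and additionally a ∉ −4K⁴ if 4 divides n. Then the polynomial x^n − a is irreducible in K[x]. -/
/-!
Write `n = 2 ^ k * m` with `m` odd and climb the tower `K ⊆ K(α)`, `α ^ 2 ^ k = a`.
Over `K(α)` the polynomial `X ^ m - α` stays irreducible: if `α = β ^ p` for an odd prime `p`,
taking norms makes `a` a `p`-th power in `K`. For `X ^ 2 ^ k - a` itself, induct on `k` through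
`K ⊆ K(√a)`: there `±√a` is not a square, because `(u + v√a) ^ 2 = ±√a` forces `a = -4u⁴`.
-/

open Polynomial IntermediateField

universe u

theorem PowerBasis.exists_eq_add_mul_gen_of_dim_eq_two {R S : Type*} [CommRing R] [Ring S]
    [Algebra R S] (pb : PowerBasis R S) (h : pb.dim = 2) (y : S) :
    ∃ u v : R, y = algebraMap R S u + algebraMap R S v * pb.gen := by
  nontriviality S
  obtain ⟨p, hp, rfl⟩ := pb.exists_eq_aeval y
  rw [eq_X_add_C_of_natDegree_le_one (by omega : p.natDegree ≤ 1)]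
  exact ⟨p.coeff 0, p.coeff 1, by simp [add_comm]⟩

variable {K : Type u} [Field K]

theorem eq_neg_four_mul_pow_four_of_sq_eq_algebraMap_mul {E : Type*} [Field E] [Algebra K E]
    {a : K} {x : E} (hx : x ^ 2 = algebraMap K E a) (hxK : x ∉ Set.range (algebraMap K E))
    {c : K} (hc : c ^ 2 = 1) {u v : K}
    (h : (algebraMap K E u + algebraMap K E v * x) ^ 2 = algebraMap K E c * x) :
    a = -4 * u ^ 4 := by
  have key : algebraMap K E (u ^ 2 + a * v ^ 2) = algebraMap K E (c - 2 * u * v) * x := by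
    simp only [map_add, map_sub, map_mul, map_pow, map_ofNat]
    linear_combination h - algebraMap K E v ^ 2 * hx
  have huv : c - 2 * u * v = 0 := by
    by_contra hne
    refine hxK ⟨(u ^ 2 + a * v ^ 2) / (c - 2 * u * v), ?_⟩
    rw [map_div₀, key, mul_div_cancel_left₀ _ ((_root_.map_ne_zero _).mpr hne)]
  have hnorm : u ^ 2 + a * v ^ 2 = 0 := by rwa [huv, map_zero, zero_mul, map_eq_zero] at key
  -- `a = a c² = 4u² · a v² = -4u⁴`
  linear_combination 4 * u ^ 2 * hnorm - a * hc + a * (c + 2 * u * v) * huv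

theorem sq_ne_algebraMap_mul_adjoinSimple_gen {E : Type u} [Field E] [Algebra K E] {a : K}
    (ha : ∀ b : K, b ^ 2 ≠ a) (ha4 : ∀ b : K, a ≠ -4 * b ^ 4)
    {x : E} (hx : minpoly K x = X ^ 2 - C a) {c : K} (hc : c ^ 2 = 1) (y : K⟮x⟯) :
    y ^ 2 ≠ algebraMap K K⟮x⟯ c * AdjoinSimple.gen K x := by
  have hint : IsIntegral K x := by
    by_contra h
    exact X_pow_sub_C_ne_zero two_pos a (hx ▸ minpoly.eq_zero h)
  have hgen : AdjoinSimple.gen K x ^ 2 = algebraMap K K⟮x⟯ a := by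
    have := aeval_gen_minpoly K x
    rwa [hx, map_sub, aeval_X_pow, aeval_C, sub_eq_zero] at this
  have hgenK : AdjoinSimple.gen K x ∉ Set.range (algebraMap K K⟮x⟯) := by
    rintro ⟨w, hw⟩
    exact ha w ((algebraMap K K⟮x⟯).injective (by rw [map_pow, hw, hgen]))
  have hdim : (adjoin.powerBasis hint).dim = 2 := by simp [hx]
  obtain ⟨u, v, rfl⟩ := (adjoin.powerBasis hint).exists_eq_add_mul_gen_of_dim_eq_two hdim y
  intro h
  exact ha4 u (eq_neg_four_mul_pow_four_of_sq_eq_algebraMap_mul hgen hgenK hc h)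

theorem norm_adjoinSimple_gen_of_minpoly_eq_X_pow_sub_C {E : Type*} [Field E] [Algebra K E]
    {m : ℕ} (hm : m ≠ 0) {a : K} {x : E} (hx : minpoly K x = X ^ m - C a) :
    Algebra.norm K (AdjoinSimple.gen K x) = (-1) ^ (m + 1) * a := by
  have hint : IsIntegral K x := by
    by_contra h
    exact X_pow_sub_C_ne_zero (Nat.pos_of_ne_zero hm) a (hx ▸ minpoly.eq_zero h)
  rw [← adjoin.powerBasis_gen hint, Algebra.PowerBasis.norm_gen_eq_coeff_zero_minpoly]
  simp [minpoly_gen, hx, coeff_X_pow, Ne.symm hm, pow_succ]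

theorem X_pow_mul_sub_C_irreducible_of_odd {m n : ℕ} (hn : Odd n) {a : K}
    (hm : Irreducible (X ^ m - C a : K[X]))
    (ha : ∀ p : ℕ, p.Prime → p ∣ n → ∀ b : K, b ^ p ≠ a) :
    Irreducible (X ^ (n * m) - C a) := by
  have hm0 : m ≠ 0 := by
    rintro rfl
    rw [pow_zero, ← C.map_one, ← map_sub] at hm
    exact not_irreducible_C _ hm
  refine X_pow_mul_sub_C_irreducible hm fun E _ _ x hx => ?_
  refine X_pow_sub_C_irreducible_of_odd hn fun p hp hpn b hb => ?_
  have hp_odd : Odd p := hn.of_dvd_nat hpn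
  refine ha p hp hpn ((-1) ^ (m + 1) * Algebra.norm K b) ?_
  rw [mul_pow, ← map_pow, hb, norm_adjoinSimple_gen_of_minpoly_eq_X_pow_sub_C hm0 hx,
    pow_right_comm, hp_odd.neg_one_pow, ← mul_assoc, ← mul_pow, neg_one_mul, neg_neg, one_pow, one_mul]

theorem X_pow_two_pow_sub_C_irreducible (k : ℕ) {a : K}
    (ha : 2 ∣ 2 ^ k → ∀ b : K, b ^ 2 ≠ a) (ha4 : 4 ∣ 2 ^ k → ∀ b : K, a ≠ -4 * b ^ 4) :
    Irreducible (X ^ 2 ^ k - C a : K[X]) := by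
  induction k generalizing K a with
  | zero => simpa using irreducible_X_sub_C a
  | succ k ih =>
    have ha2 : ∀ b : K, b ^ 2 ≠ a := ha (dvd_pow_self 2 k.succ_ne_zero)
    rcases k with _ | k
    · simpa using X_pow_sub_C_irreducible_of_prime Nat.prime_two ha2
    have ha4' : ∀ b : K, a ≠ -4 * b ^ 4 := ha4 (Dvd.intro (2 ^ k) (by ring))
    rw [pow_succ]
    refine X_pow_mul_sub_C_irreducible (X_pow_sub_C_irreducible_of_prime Nat.prime_two ha2)
      fun E _ _ x hx => ih (fun _ y hy => ?_) fun _ y hy => ?_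
    · exact sq_ne_algebraMap_mul_adjoinSimple_gen ha2 ha4' hx (one_pow 2) y (by simpa using hy)
    · -- `α = -4y⁴` makes `-α` the square of `2y²`
      refine sq_ne_algebraMap_mul_adjoinSimple_gen ha2 ha4' hx (by norm_num : (-1 : K) ^ 2 = 1)
        (2 * y ^ 2) ?_
      rw [hy, map_neg, map_one]
      ring

open Polynomial in
/-- **Capelli's lemma.** Let `K` be a field, `n ≥ 2`, `a ∈ K`. If `a ∉ K^q` for every
prime `q` dividing `n`, and moreover `a ∉ -4K⁴` whenever `4 ∣ n`, then `X^n - a` is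
irreducible over `K`. -/
theorem capelli_irreducible {K : Type*} [Field K] (n : ℕ) (hn : 2 ≤ n) (a : K)
    (h1 : ∀ q : ℕ, q.Prime → q ∣ n → ¬∃ b : K, b ^ q = a)
    (h2 : 4 ∣ n → ¬∃ b : K, a = -4 * b ^ 4) :
    Irreducible ((X : K[X]) ^ n - C a) := by
  obtain ⟨k, m, hm, rfl⟩ := Nat.exists_eq_two_pow_mul_odd (by omega : n ≠ 0)
  rw [mul_comm]
  refine X_pow_mul_sub_C_irreducible_of_odd hm (X_pow_two_pow_sub_C_irreducible k ?_ ?_) ?_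
  · exact fun h b hb => h1 2 Nat.prime_two (h.mul_right m) ⟨b, hb⟩
  · exact fun h b hb => h2 (h.mul_right m) ⟨b, hb⟩
  · exact fun p hp hpm b hb => h1 p hp (hpm.mul_left _) ⟨b, hb⟩
end
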